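/- Fix Ĵ ∈ [0,∞) and let (Y_k)_{k≥1} be the Markov chain on Ω with transition matrix P_W started from an arbitrary initial configuration Y₁ = σ ∈ Ω, with trajectory law ℙ_σ on Ω^ℕ (the canonical Markov-chain construction). Then for every function g : Ω → ℝ, ℙ_σ-almost surely, (1/M)·∑_{k=1}^{M} g(Y_k) → E_{μ_N}[g] as M → ∞. -/

import Mathlib

open Real Finset

noncomputable section

/-- Spin value of a Boolean: `true ↦ +1`, `false ↦ -1`. -/
def spin (b : Bool) : ℝ := if b then 1 else -1

/-- Configurations of the 1D Ising model on the cycle `ZMod N`. -/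
abbrev Config (N : ℕ) := ZMod N → Bool

/-- Flip the spins of `σ` at all sites of `A`. -/
def flipSpins {N : ℕ} (A : Finset (ZMod N)) (σ : Config N) : Config N :=
  fun i => if i ∈ A then !(σ i) else σ i

/-- `A` is a (nonempty) arc `{a, a+1, …, a+k}` of the cycle. -/
def IsArc {N : ℕ} (A : Finset (ZMod N)) : Prop :=
  ∃ (a : ZMod N) (k : ℕ),
    A = Finset.image (fun t : ℕ => a + (t : ZMod N)) (Finset.range (k + 1))

/-- `σ` is constant on `A`. -/
def ConstOn {N : ℕ} (σ : Config N) (A : Finset (ZMod N)) : Prop :=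
  ∀ i ∈ A, ∀ j ∈ A, σ i = σ j

/-- The set of sites where two configurations differ. -/
def diffSet {N : ℕ} [NeZero N] (σ η : Config N) : Finset (ZMod N) :=
  Finset.univ.filter fun i => σ i ≠ η i

/-- The edge boundary of `A`: edges `(i, i+1)` with exactly one endpoint in `A`. -/
def edgeBoundary {N : ℕ} [NeZero N] (A : Finset (ZMod N)) : Finset (ZMod N) :=
  Finset.univ.filter fun i => ¬ ((i ∈ A) ↔ (i + 1 ∈ A))

/-- Edges `(i, i+1)` on which the spins of `σ` agree (i.e. `σ_i · σ_{i+1} = +1`). -/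
def Bplus {N : ℕ} [NeZero N] (σ : Config N) : Finset (ZMod N) :=
  Finset.univ.filter fun i => σ i = σ (i + 1)

open scoped Classical in
/-- Transition matrix of the Wolff dynamics for the 1D Ising model, with
`κ = 1 - e^{-2Ĵ}` and `κ̂ = e^{-2Ĵ}`. -/
noncomputable def PW (N : ℕ) [NeZero N] (J : ℝ) (σ η : Config N) : ℝ :=
  if IsArc (diffSet σ η) ∧ ConstOn σ (diffSet σ η) then
    if diffSet σ η = Finset.univ then
      ((N : ℝ) * exp (-2 * J) + (1 - exp (-2 * J))) * (1 - exp (-2 * J)) ^ (N - 1)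
    else
      ((diffSet σ η).card : ℝ) / N * (1 - exp (-2 * J)) ^ ((diffSet σ η).card - 1) *
        exp (-2 * J) ^ ((edgeBoundary (diffSet σ η) ∩ Bplus σ).card)
  else 0

/-- Energy functional `∑ i, σ_i σ_{i+1}` of a configuration. -/
noncomputable def energy (N : ℕ) [NeZero N] (σ : Config N) : ℝ :=
  ∑ i : ZMod N, spin (σ i) * spin (σ (i + 1))

/-- The Gibbs measure of the 1D Ising model with periodic boundary conditions. -/
noncomputable def gibbs (N : ℕ) [NeZero N] (J : ℝ) (σ : Config N) : ℝ :=
  exp (J * energy N σ) / ∑ η : Config N, exp (J * energy N η)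

/-- Expectation with respect to the Gibbs measure. -/
noncomputable def Emu (N : ℕ) [NeZero N] (J : ℝ) (f : Config N → ℝ) : ℝ :=
  ∑ σ : Config N, f σ * gibbs N J σ

/-- Dirichlet form of a transition matrix `P` with respect to a measure `μ`. -/
noncomputable def dirichlet (N : ℕ) [NeZero N] (P : Config N → Config N → ℝ)
    (μ : Config N → ℝ) (f : Config N → ℝ) : ℝ :=
  (1/2) * ∑ σ : Config N, ∑ η : Config N, (f σ - f η)^2 * P η σ * μ η

/-
The Wolff chain is reversible with respect to the Gibbs measure (the boundary factor
`κ̂^{#(∂A ∩ B₊^σ)}` compensates exactly the energy change of flipping the cluster `A`), and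
single spin flips have positive probability, so the chain is irreducible.  For such a chain on a
finite space the Poisson equation `f - P f = g - μ(g)` is solvable, which splits
`∑_{k<M} g(Y_k)` into `M μ(g)`, a bounded telescoping term and a martingale with bounded
increments.  The fourth moment of that martingale is `O(M²)`, so Markov's inequality and
Borel–Cantelli show that it is `o(M)` almost surely.  That the rows of `P_W` sum to one is not
computed from its formula: it is forced by the consistency of the finite-dimensional
distributions of `Y` along paths of positive probability, which reach every configuration.
-/

open Filter MeasureTheory Topology

lemma add_sq_le_of_sq_le {a b B : ℝ} (hb : b ^ 2 ≤ B) : (a + b) ^ 2 ≤ a ^ 2 + 2 * a * b + B := by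
  nlinarith

lemma add_pow_four_le {a b B : ℝ} (hb : b ^ 2 ≤ B) :
    (a + b) ^ 4 ≤ a ^ 4 + 4 * a ^ 3 * b + 8 * B * a ^ 2 + 3 * B ^ 2 := by
  have hB : 0 ≤ B := (sq_nonneg b).trans hb
  have h3 : 4 * a * b ^ 3 ≤ 2 * a ^ 2 * b ^ 2 + 2 * b ^ 4 := by
    nlinarith [sq_nonneg (a * b - b ^ 2)]
  have h4 : b ^ 4 ≤ B ^ 2 := by nlinarith [sq_nonneg b]
  nlinarith [mul_le_mul_of_nonneg_left hb (sq_nonneg a)]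

section Paths

variable {S : Type*}

def incrSum (d : S → S → ℝ) (n : ℕ) (p : Fin (n + 1) → S) : ℝ :=
  ∑ k : Fin n, d (p k.castSucc) (p k.succ)

lemma incrSum_succ (d : S → S → ℝ) (n : ℕ) (p : Fin (n + 2) → S) :
    incrSum d (n + 1) p =
      incrSum d n (Fin.init p) + d (p (Fin.last n).castSucc) (p (Fin.last (n + 1))) := by
  simp [incrSum, Fin.sum_univ_castSucc, Fin.init, Fin.succ_castSucc, -Fin.castSucc_succ]

lemma incrSum_eq_sum_range (d : S → S → ℝ) (n : ℕ) (x : ℕ → S) :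
    incrSum d n (fun j : Fin (n + 1) => x j) = ∑ k ∈ range n, d (x k) (x (k + 1)) :=
  Fin.sum_univ_eq_sum_range (fun k => d (x k) (x (k + 1))) n

variable [DecidableEq S]

def pathWeight (K : S → S → ℝ) (s₀ : S) (m : ℕ) (p : Fin (m + 1) → S) : ℝ :=
  (if p 0 = s₀ then 1 else 0) * ∏ j : Fin m, K (p j.castSucc) (p j.succ)

variable {K : S → S → ℝ} {s₀ : S}

lemma pathWeight_nonneg (hK : ∀ a b, 0 ≤ K a b) (m : ℕ) (p : Fin (m + 1) → S) :
    0 ≤ pathWeight K s₀ m p :=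
  mul_nonneg (by split_ifs <;> norm_num) (prod_nonneg fun _ _ => hK _ _)

lemma pathWeight_snoc (m : ℕ) (p : Fin (m + 1) → S) (c : S) :
    pathWeight K s₀ (m + 1) (Fin.snoc p c) = pathWeight K s₀ m p * K (p (Fin.last m)) c := by
  simp [pathWeight, Fin.prod_univ_castSucc, Fin.succ_castSucc, -Fin.castSucc_succ]

lemma exists_pathWeight_pos {τ : S} (h : Relation.ReflTransGen (fun a b => 0 < K a b) s₀ τ) :
    ∃ m, ∃ p : Fin (m + 1) → S, p (Fin.last m) = τ ∧ 0 < pathWeight K s₀ m p := by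
  induction h with
  | refl => exact ⟨0, fun _ => s₀, rfl, by simp [pathWeight]⟩
  | tail _ hbc ih =>
    obtain ⟨m, p, rfl, hp⟩ := ih
    exact ⟨m + 1, Fin.snoc p _, Fin.snoc_last .., by rw [pathWeight_snoc]; exact mul_pos hp hbc⟩

variable [Fintype S]

variable (K s₀) in
def pathExpect (m : ℕ) (H : (Fin (m + 1) → S) → ℝ) : ℝ :=
  ∑ p, pathWeight K s₀ m p * H p

lemma pathExpect_succ (m : ℕ) (H : (Fin (m + 2) → S) → ℝ) :
    pathExpect K s₀ (m + 1) H = ∑ p : Fin (m + 1) → S, ∑ c,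
      pathWeight K s₀ m p * K (p (Fin.last m)) c * H (Fin.snoc p c) := by
  rw [pathExpect, ← (Fin.snocEquiv fun _ => S).sum_comp, Fintype.sum_prod_type_right]
  simp [Fin.snocEquiv, pathWeight_snoc]

lemma pathExpect_comp_init (m : ℕ) (H : (Fin (m + 1) → S) → ℝ) :
    pathExpect K s₀ (m + 1) (fun q => H (Fin.init q)) =
      pathExpect K s₀ m (fun p => H p * ∑ c, K (p (Fin.last m)) c) := by
  rw [pathExpect_succ, pathExpect]
  simp only [Fin.init_snoc, mul_sum]
  exact sum_congr rfl fun p _ => sum_congr rfl fun c _ => by ring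

lemma pathExpect_add (m : ℕ) (H H' : (Fin (m + 1) → S) → ℝ) :
    pathExpect K s₀ m (fun p => H p + H' p) = pathExpect K s₀ m H + pathExpect K s₀ m H' := by
  simp only [pathExpect, mul_add, sum_add_distrib]

lemma pathExpect_const_mul (m : ℕ) (r : ℝ) (H : (Fin (m + 1) → S) → ℝ) :
    pathExpect K s₀ m (fun p => r * H p) = r * pathExpect K s₀ m H := by
  simp only [pathExpect, mul_sum]
  exact sum_congr rfl fun p _ => by ring

lemma pathExpect_mono (hK : ∀ a b, 0 ≤ K a b) (m : ℕ) {H H' : (Fin (m + 1) → S) → ℝ}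
    (h : ∀ p, H p ≤ H' p) : pathExpect K s₀ m H ≤ pathExpect K s₀ m H' :=
  sum_le_sum fun p _ => mul_le_mul_of_nonneg_left (h p) (pathWeight_nonneg hK m p)

section Stochastic

variable (hrow : ∀ a, ∑ c, K a c = 1)
include hrow

lemma pathExpect_comp_init_of_sum_eq_one (m : ℕ) (H : (Fin (m + 1) → S) → ℝ) :
    pathExpect K s₀ (m + 1) (fun q => H (Fin.init q)) = pathExpect K s₀ m H := by
  simp [pathExpect_comp_init, hrow]

lemma pathExpect_const (m : ℕ) (r : ℝ) : pathExpect K s₀ m (fun _ => r) = r := by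
  induction m with
  | zero =>
    rw [pathExpect, Fintype.sum_eq_single (fun _ => s₀)]
    · simp [pathWeight]
    · intro p hp
      have : p 0 ≠ s₀ := fun h => hp (funext fun j => by rw [Fin.fin_one_eq_zero j, h])
      simp [pathWeight, this]
  | succ m ih => exact (pathExpect_comp_init_of_sum_eq_one hrow m fun _ => r).trans ih

end Stochastic

lemma pathExpect_mul_increment {d : S → S → ℝ} (hd : ∀ a, ∑ c, K a c * d a c = 0) (m : ℕ)
    (G : (Fin (m + 1) → S) → ℝ) :
    pathExpect K s₀ (m + 1)
      (fun q => G (Fin.init q) * d (q (Fin.last m).castSucc) (q (Fin.last (m + 1)))) = 0 := by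
  rw [pathExpect_succ]
  refine sum_eq_zero fun p _ => ?_
  simp only [Fin.init_snoc, Fin.snoc_castSucc, Fin.snoc_last]
  calc ∑ c, pathWeight K s₀ m p * K (p (Fin.last m)) c * (G p * d (p (Fin.last m)) c)
      = pathWeight K s₀ m p * G p * ∑ c, K (p (Fin.last m)) c * d (p (Fin.last m)) c := by
        rw [mul_sum]; exact sum_congr rfl fun c _ => by ring
    _ = 0 := by rw [hd, mul_zero]

section Moments

variable (hK : ∀ a b, 0 ≤ K a b) (hrow : ∀ a, ∑ c, K a c = 1) {d : S → S → ℝ}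
  (hd : ∀ a, ∑ c, K a c * d a c = 0) {B : ℝ} (hB : ∀ a b, d a b ^ 2 ≤ B)
include hK hrow hd hB

lemma pathExpect_incrSum_sq_le (n : ℕ) :
    pathExpect K s₀ n (fun p => incrSum d n p ^ 2) ≤ B * n := by
  induction n with
  | zero => simp [incrSum, pathExpect]
  | succ n ih =>
    calc pathExpect K s₀ (n + 1) (fun p => incrSum d (n + 1) p ^ 2)
        ≤ pathExpect K s₀ (n + 1) (fun q => incrSum d n (Fin.init q) ^ 2 +
            (2 * incrSum d n (Fin.init q) * d (q (Fin.last n).castSucc) (q (Fin.last (n + 1))) +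
              B)) :=
          pathExpect_mono hK _ fun q => by
            rw [incrSum_succ, ← add_assoc]; exact add_sq_le_of_sq_le (hB _ _)
      _ = pathExpect K s₀ n (fun p => incrSum d n p ^ 2) + B := by
          rw [pathExpect_add, pathExpect_add,
            pathExpect_comp_init_of_sum_eq_one hrow n (fun p => incrSum d n p ^ 2),
            pathExpect_mul_increment hd n (fun p => 2 * incrSum d n p), pathExpect_const hrow,
            zero_add]
      _ ≤ B * (n + 1 : ℕ) := by push_cast; linarith

lemma pathExpect_incrSum_pow_four_le (n : ℕ) :
    pathExpect K s₀ n (fun p => incrSum d n p ^ 4) ≤ 4 * B ^ 2 * n ^ 2 := by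
  induction n with
  | zero => simp [incrSum, pathExpect]
  | succ n ih =>
    have h2 := pathExpect_incrSum_sq_le (s₀ := s₀) hK hrow hd hB n
    calc pathExpect K s₀ (n + 1) (fun p => incrSum d (n + 1) p ^ 4)
        ≤ pathExpect K s₀ (n + 1) (fun q => incrSum d n (Fin.init q) ^ 4 +
            (4 * incrSum d n (Fin.init q) ^ 3 *
                d (q (Fin.last n).castSucc) (q (Fin.last (n + 1))) +
              (8 * B * incrSum d n (Fin.init q) ^ 2 + 3 * B ^ 2))) :=
          pathExpect_mono hK _ fun q => by
            rw [incrSum_succ, ← add_assoc, ← add_assoc]; exact add_pow_four_le (hB _ _)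
      _ = pathExpect K s₀ n (fun p => incrSum d n p ^ 4) +
            (8 * B * pathExpect K s₀ n (fun p => incrSum d n p ^ 2) + 3 * B ^ 2) := by
          rw [pathExpect_add, pathExpect_add,
            pathExpect_comp_init_of_sum_eq_one hrow n (fun p => incrSum d n p ^ 4),
            pathExpect_mul_increment hd n (fun p => 4 * incrSum d n p ^ 3), pathExpect_add,
            pathExpect_const hrow, pathExpect_const_mul,
            pathExpect_comp_init_of_sum_eq_one hrow n (fun p => incrSum d n p ^ 2), zero_add]
      _ ≤ 4 * B ^ 2 * ((n + 1 : ℕ) : ℝ) ^ 2 := by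
          have hB0 : 0 ≤ B := (sq_nonneg _).trans (hB s₀ s₀)
          push_cast
          nlinarith [mul_le_mul_of_nonneg_left h2 hB0]

end Moments

end Paths

section Poisson

variable {S : Type*} [Fintype S] {K : S → S → ℝ}

lemma eq_of_harmonic (hK : ∀ a b, 0 ≤ K a b) (hrow : ∀ a, ∑ c, K a c = 1)
    (hirr : ∀ a b, Relation.ReflTransGen (fun a b => 0 < K a b) a b) {v : S → ℝ}
    (hv : ∀ a, ∑ b, K a b * v b = v a) (a b : S) : v a = v b := by
  -- Maximum principle: the set where `v` is maximal is closed under steps of positive weight.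
  obtain ⟨s, -, hs⟩ := exists_max_image univ v ⟨a, mem_univ a⟩
  suffices h : ∀ τ, v τ = v s by rw [h a, h b]
  intro τ
  induction hirr s τ with
  | refl => rfl
  | @tail b c _ hbc ih =>
    have hsum : ∑ c', K b c' * (v s - v c') = 0 := by
      simp [mul_sub, sum_sub_distrib, ← sum_mul, hrow, hv, ih]
    have hc := (sum_eq_zero_iff_of_nonneg fun c' _ =>
      mul_nonneg (hK _ _) (sub_nonneg.2 (hs c' (mem_univ _)))).1 hsum c (mem_univ _)
    linarith [(mul_eq_zero.1 hc).resolve_left hbc.ne']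

lemma sum_mul_eq_of_reversible (hrow : ∀ a, ∑ c, K a c = 1) {μ : S → ℝ}
    (hrev : ∀ a b, μ a * K a b = μ b * K b a) (b : S) : ∑ a, μ a * K a b = μ b := by
  simp_rw [hrev, ← mul_sum, hrow, mul_one]

lemma exists_poisson_solution (hK : ∀ a b, 0 ≤ K a b) (hrow : ∀ a, ∑ c, K a c = 1)
    (hirr : ∀ a b, Relation.ReflTransGen (fun a b => 0 < K a b) a b) {μ : S → ℝ}
    (hμ : ∑ a, μ a = 1) (hstat : ∀ b, ∑ a, μ a * K a b = μ b) (g : S → ℝ) :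
    ∃ f : S → ℝ, ∀ a, f a - ∑ b, K a b * f b = g a - ∑ b, g b * μ b := by
  classical
  -- `range (1 - K) ≤ ker μ`, and both have codimension one because harmonic functions are
  -- constant.
  let L : (S → ℝ) →ₗ[ℝ] S → ℝ := LinearMap.id - Matrix.mulVecLin (Matrix.of K)
  let φ : (S → ℝ) →ₗ[ℝ] ℝ := ∑ a, μ a • LinearMap.proj a
  have hL : ∀ u a, L u a = u a - ∑ b, K a b * u b := fun u a => by
    simp [L, Matrix.mulVec, dotProduct]
  have hφ : ∀ u, φ u = ∑ a, μ a * u a := fun u => by simp [φ]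
  have hker : LinearMap.ker L ≤ Submodule.span ℝ {fun _ => 1} := by
    intro u hu
    have hharm : ∀ a, ∑ b, K a b * u b = u a := fun a => by
      have := congr_fun (LinearMap.mem_ker.1 hu) a
      rw [hL, Pi.zero_apply, sub_eq_zero] at this
      exact this.symm
    obtain ⟨a₀, -, -⟩ := exists_ne_zero_of_sum_ne_zero (hμ ▸ one_ne_zero)
    exact Submodule.mem_span_singleton.2
      ⟨u a₀, funext fun a => by simp [eq_of_harmonic hK hrow hirr hharm a₀ a]⟩
  have hrange : LinearMap.range L ≤ LinearMap.ker φ := by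
    rintro _ ⟨u, rfl⟩
    simp only [LinearMap.mem_ker, hφ, hL, mul_sub, sum_sub_distrib, mul_sum]
    rw [sum_comm, sub_eq_zero]
    simp_rw [← mul_assoc, ← sum_mul, hstat]
  have hφ_surj : LinearMap.range φ = ⊤ :=
    LinearMap.range_eq_top.2 fun r => ⟨fun _ => r, by simp [hφ, ← sum_mul, hμ]⟩
  have h1 := L.finrank_range_add_finrank_ker
  have h2 := φ.finrank_range_add_finrank_ker
  have h3 : Module.finrank ℝ (LinearMap.ker L) ≤ 1 :=
    (Submodule.finrank_mono hker).trans ((finrank_span_le_card _).trans (by simp))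
  rw [hφ_surj, finrank_top, Module.finrank_self] at h2
  have hLφ : LinearMap.range L = LinearMap.ker φ :=
    Submodule.eq_of_le_of_finrank_le hrange (by omega)
  obtain ⟨f, hf⟩ : (fun a => g a - ∑ b, g b * μ b) ∈ LinearMap.range L := by
    rw [hLφ, LinearMap.mem_ker, hφ]
    simp [mul_sub, ← sum_mul, hμ, mul_comm]
  exact ⟨f, fun a => by rw [← hL, hf]⟩

lemma sum_range_eq_add_martingale {f g : S → ℝ} {c : ℝ}
    (hf : ∀ a, f a - ∑ b, K a b * f b = g a - c) (x : ℕ → S) (M : ℕ) :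
    ∑ k ∈ range M, g (x k) = M * c + (f (x 0) - f (x M)) +
      ∑ k ∈ range M, (f (x (k + 1)) - ∑ b, K (x k) b * f b) := by
  have hg : ∀ k, g (x k) = c + (f (x k) - f (x (k + 1))) +
      (f (x (k + 1)) - ∑ b, K (x k) b * f b) := fun k => by linarith [hf (x k)]
  simp only [hg, sum_add_distrib, sum_const, card_range, sum_range_sub', nsmul_eq_mul]

lemma tendsto_average_of_poisson {f g : S → ℝ} {c : ℝ}
    (hf : ∀ a, f a - ∑ b, K a b * f b = g a - c) (x : ℕ → S)
    (hmart : Tendsto (fun M : ℕ => (∑ k ∈ range M, (f (x (k + 1)) - ∑ b, K (x k) b * f b)) / M)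
      atTop (𝓝 0)) :
    Tendsto (fun M : ℕ => (∑ k ∈ range M, g (x k)) / M) atTop (𝓝 c) := by
  obtain ⟨F, hF⟩ := Finite.exists_le fun a => |f a|
  have hbd : ∀ M, |f (x 0) - f (x M)| ≤ 2 * F := fun M =>
    (abs_sub _ _).trans (by linarith [hF (x 0), hF (x M)])
  have hbdry : Tendsto (fun M : ℕ => (f (x 0) - f (x M)) / M) atTop (𝓝 0) :=
    tendsto_bdd_div_atTop_nhds_zero (Eventually.of_forall fun M => (abs_le.1 (hbd M)).1)
      (Eventually.of_forall fun M => (abs_le.1 (hbd M)).2) tendsto_natCast_atTop_atTop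
  have hlim := (tendsto_const_nhds (x := c)).add (hbdry.add hmart)
  rw [add_zero, add_zero] at hlim
  refine hlim.congr' ((eventually_ne_atTop 0).mono fun M hM => ?_)
  beta_reduce
  rw [sum_range_eq_add_martingale hf x M]
  field_simp
  ring

end Poisson

section BorelCantelli

variable {E : Type*} [MeasurableSpace E] {P : Measure E} [IsFiniteMeasure P]

lemma ae_eventually_pow_four_lt_of_integral_le {Z : ℕ → E → ℝ} {A : ℝ}
    (hZ : ∀ n, Integrable (fun e => Z n e ^ 4) P) (hA : ∀ n, ∫ e, Z n e ^ 4 ∂P ≤ A * n ^ 2)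
    (j : ℕ) : ∀ᵐ e ∂P, ∀ᶠ n : ℕ in atTop, Z (n + 1) e ^ 4 < (((n : ℝ) + 1) / (j + 1)) ^ 4 := by
  set s : ℕ → Set E := fun n => {e | (((n : ℝ) + 1) / (j + 1)) ^ 4 ≤ Z (n + 1) e ^ 4}
  have hA0 : 0 ≤ A := by
    simpa using (integral_nonneg fun e => by positivity).trans (hA 1)
  have hs : ∀ n, P.real (s n) ≤ A * (j + 1) ^ 4 / ((n : ℝ) + 1) ^ 2 := by
    intro n
    have ht : 0 < (((n : ℝ) + 1) / (j + 1)) ^ 4 := by positivity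
    have hmarkov := mul_meas_ge_le_integral_of_nonneg (ae_of_all _ fun e => by positivity)
      (hZ (n + 1)) ((((n : ℝ) + 1) / (j + 1)) ^ 4)
    have hAn := hA (n + 1)
    push_cast at hAn
    calc P.real (s n) ≤ A * ((n : ℝ) + 1) ^ 2 / (((n : ℝ) + 1) / (j + 1)) ^ 4 := by
          rw [le_div_iff₀ ht, mul_comm]; exact hmarkov.trans hAn
      _ = A * (j + 1) ^ 4 / ((n : ℝ) + 1) ^ 2 := by field_simp
  have hsum : Summable fun n : ℕ => A * (j + 1) ^ 4 / ((n : ℝ) + 1) ^ 2 := by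
    have := (summable_nat_add_iff 1).2 (Real.summable_one_div_nat_pow.2 one_lt_two)
    refine (this.mul_left (A * (j + 1) ^ 4)).congr fun n => ?_
    push_cast
    ring
  have htsum : ∑' n, P (s n) ≠ ⊤ := by
    refine ne_top_of_le_ne_top
      (ENNReal.ofReal_ne_top (r := ∑' n : ℕ, A * (j + 1) ^ 4 / ((n : ℝ) + 1) ^ 2)) ?_
    rw [ENNReal.ofReal_tsum_of_nonneg (fun n => by positivity) hsum]
    exact ENNReal.tsum_le_tsum fun n => by
      rw [← ofReal_measureReal]; exact ENNReal.ofReal_le_ofReal (hs n)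
  filter_upwards [ae_eventually_notMem htsum] with e he
  exact he.mono fun n hn => not_le.1 hn

lemma tendsto_div_of_forall_eventually_abs_lt {z : ℕ → ℝ}
    (h : ∀ j : ℕ, ∀ᶠ n : ℕ in atTop, |z (n + 1)| < ((n : ℝ) + 1) / (j + 1)) :
    Tendsto (fun n => z n / n) atTop (𝓝 0) := by
  rw [← tendsto_add_atTop_iff_nat 1, Metric.tendsto_nhds]
  intro δ hδ
  obtain ⟨j, hj⟩ := exists_nat_one_div_lt hδ
  filter_upwards [h j] with n hn
  have hn1 : (0 : ℝ) < n + 1 := by positivity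
  rw [Real.dist_eq, sub_zero, abs_div, Nat.cast_add_one, abs_of_pos hn1, div_lt_iff₀ hn1]
  calc |z (n + 1)| < ((n : ℝ) + 1) / (j + 1) := hn
    _ = 1 / (j + 1) * (n + 1) := by ring
    _ < δ * (n + 1) := by gcongr

lemma ae_tendsto_div_of_integral_pow_four_le {Z : ℕ → E → ℝ} {A : ℝ}
    (hZ : ∀ n, Integrable (fun e => Z n e ^ 4) P) (hA : ∀ n, ∫ e, Z n e ^ 4 ∂P ≤ A * n ^ 2) :
    ∀ᵐ e ∂P, Tendsto (fun n => Z n e / n) atTop (𝓝 0) := by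
  filter_upwards [ae_all_iff.2 (ae_eventually_pow_four_lt_of_integral_le hZ hA)] with e he
  refine tendsto_div_of_forall_eventually_abs_lt fun j => (he j).mono fun n hn => ?_
  exact lt_of_pow_lt_pow_left₀ 4 (by positivity) (by rwa [Even.pow_abs (by decide)])

end BorelCantelli

section Chain

variable {S : Type*} [Fintype S] [MeasurableSpace S] [MeasurableSingletonClass S]
  {E : Type*} [MeasurableSpace E] {P : Measure E} {X : ℕ → E → S}

lemma integrable_comp_path [IsFiniteMeasure P] (hXm : ∀ k, Measurable (X k)) (m : ℕ)
    (H : (Fin (m + 1) → S) → ℝ) : Integrable (fun e => H (fun j : Fin (m + 1) => X j e)) P := by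
  have hΦ : Measurable fun e (j : Fin (m + 1)) => X j e := measurable_pi_lambda _ fun j => hXm j
  exact (integrable_map_measure (measurable_of_finite H).aestronglyMeasurable
    hΦ.aemeasurable).1 Integrable.of_finite

variable [DecidableEq S]

def IsMarkovChain (K : S → S → ℝ) (s₀ : S) (P : Measure E) (X : ℕ → E → S) : Prop :=
  ∀ (m : ℕ) (p : Fin (m + 1) → S),
    P {e | ∀ j : Fin (m + 1), X j e = p j} = ENNReal.ofReal (pathWeight K s₀ m p)

variable {K : S → S → ℝ} {s₀ : S}

namespace IsMarkovChain

variable [IsFiniteMeasure P] (hX : IsMarkovChain K s₀ P X) (hXm : ∀ k, Measurable (X k))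
  (hK : ∀ a b, 0 ≤ K a b)
include hX hXm hK

lemma integral_comp_path (m : ℕ) (H : (Fin (m + 1) → S) → ℝ) :
    ∫ e, H (fun j : Fin (m + 1) => X j e) ∂P = pathExpect K s₀ m H := by
  have hΦ : Measurable fun e (j : Fin (m + 1)) => X j e := measurable_pi_lambda _ fun j => hXm j
  rw [← integral_map hΦ.aemeasurable (measurable_of_finite H).aestronglyMeasurable,
    integral_fintype Integrable.of_finite, pathExpect]
  refine sum_congr rfl fun p _ => ?_
  have hpre : (fun e (j : Fin (m + 1)) => X j e) ⁻¹' {p} =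
      {e | ∀ j : Fin (m + 1), X j e = p j} := by
    ext e; simp [funext_iff]
  rw [measureReal_def, Measure.map_apply hΦ (measurableSet_singleton p), hpre, hX,
    ENNReal.toReal_ofReal (pathWeight_nonneg hK m p), smul_eq_mul]

lemma sum_eq_one (hirr : ∀ τ, Relation.ReflTransGen (fun a b => 0 < K a b) s₀ τ) (a : S) :
    ∑ c, K a c = 1 := by
  obtain ⟨m, p, rfl, hp⟩ := exists_pathWeight_pos (hirr a)
  -- The law of `(X₀, …, X_m)` is the marginal of that of `(X₀, …, X_{m+1})`.
  have hmarg : pathExpect K s₀ m (fun q => (if q = p then 1 else 0) * ∑ c, K (q (Fin.last m)) c) =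
      pathExpect K s₀ m (fun q => if q = p then 1 else 0) := by
    rw [← pathExpect_comp_init, ← hX.integral_comp_path hXm hK, ← hX.integral_comp_path hXm hK]
    rfl
  simp only [pathExpect, ite_mul, one_mul, zero_mul, mul_ite, mul_one, mul_zero,
    sum_ite_eq', mem_univ, if_true] at hmarg
  simpa using mul_left_cancel₀ hp.ne' (hmarg.trans (mul_one _).symm)

theorem ae_tendsto_average [IsProbabilityMeasure P]
    (hirr : ∀ a b, Relation.ReflTransGen (fun a b => 0 < K a b) a b) {μ : S → ℝ}
    (hμ : ∑ a, μ a = 1) (hrev : ∀ a b, μ a * K a b = μ b * K b a) (g : S → ℝ) :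
    ∀ᵐ e ∂P, Tendsto (fun M : ℕ => (∑ k ∈ range M, g (X k e)) / M) atTop
      (𝓝 (∑ a, g a * μ a)) := by
  have hrow := hX.sum_eq_one hXm hK (hirr s₀)
  obtain ⟨f, hf⟩ :=
    exists_poisson_solution hK hrow hirr hμ (sum_mul_eq_of_reversible hrow hrev) g
  set d : S → S → ℝ := fun a b => f b - ∑ c, K a c * f c
  have hd : ∀ a, ∑ b, K a b * d a b = 0 := fun a => by
    simp [d, mul_sub, ← sum_mul, hrow]
  obtain ⟨B, hB⟩ := Finite.exists_le fun ab : S × S => d ab.1 ab.2 ^ 2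
  have hmart := ae_tendsto_div_of_integral_pow_four_le
    (fun n => integrable_comp_path hXm n fun p => incrSum d n p ^ 4) fun n =>
      (hX.integral_comp_path hXm hK n fun p => incrSum d n p ^ 4).trans_le
        (pathExpect_incrSum_pow_four_le hK hrow hd (fun a b => hB (a, b)) n)
  filter_upwards [hmart] with e he
  refine tendsto_average_of_poisson hf (fun k => X k e) (he.congr fun n => ?_)
  exact congrArg (· / (n : ℝ)) (incrSum_eq_sum_range d n fun k => X k e)

end IsMarkovChain

end Chain

section Wolff

variable {N : ℕ} [NeZero N] {J : ℝ}

lemma mem_diffSet {σ η : Config N} {i : ZMod N} : i ∈ diffSet σ η ↔ σ i ≠ η i := by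
  simp [diffSet]

lemma diffSet_comm (σ η : Config N) : diffSet σ η = diffSet η σ := by
  ext i; simp [mem_diffSet, ne_comm]

lemma flipSpins_diffSet (σ η : Config N) : flipSpins (diffSet σ η) σ = η := by
  funext i
  by_cases h : σ i = η i <;> simp_all [flipSpins, mem_diffSet, Bool.eq_not_iff]

lemma diffSet_flipSpins (σ : Config N) (A : Finset (ZMod N)) : diffSet σ (flipSpins A σ) = A := by
  ext i
  by_cases h : i ∈ A <;> simp [mem_diffSet, flipSpins, h]

omit [NeZero N] in
lemma flipSpins_insert (σ : Config N) {A : Finset (ZMod N)} {i : ZMod N} (hi : i ∉ A) :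
    flipSpins (insert i A) σ = flipSpins {i} (flipSpins A σ) := by
  funext j
  by_cases hj : j = i
  · subst hj; simp [flipSpins, hi]
  · simp [flipSpins, hj]

omit [NeZero N] in
lemma reflTransGen_flipSpins (σ : Config N) (A : Finset (ZMod N)) :
    Relation.ReflTransGen (fun σ τ => ∃ i, τ = flipSpins {i} σ) σ (flipSpins A σ) := by
  induction A using Finset.induction_on with
  | empty => convert Relation.ReflTransGen.refl; funext j; simp [flipSpins]
  | insert i A hi ih => rw [flipSpins_insert σ hi]; exact ih.tail ⟨i, rfl⟩

lemma one_sub_exp_neg_two_mul_nonneg (hJ : 0 ≤ J) : 0 ≤ 1 - exp (-2 * J) := by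
  have : exp (-2 * J) ≤ 1 := exp_le_one_iff.2 (by linarith)
  linarith

lemma PW_nonneg (hJ : 0 ≤ J) (σ η : Config N) : 0 ≤ PW N J σ η := by
  have := one_sub_exp_neg_two_mul_nonneg hJ
  unfold PW
  split_ifs <;> positivity

lemma PW_flipSpins_singleton_pos (hJ : 0 ≤ J) (σ : Config N) (i : ZMod N) :
    0 < PW N J σ (flipSpins {i} σ) := by
  have hκ := one_sub_exp_neg_two_mul_nonneg hJ
  unfold PW
  rw [diffSet_flipSpins, if_pos ⟨⟨i, 0, by simp⟩, by simp [ConstOn]⟩]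
  split_ifs with huniv
  · have hN : N = 1 := by simpa using congr_arg Finset.card huniv.symm
    subst hN
    norm_num
  · have := NeZero.pos N
    simp only [card_singleton, Nat.sub_self, pow_zero, Nat.cast_one, mul_one]
    positivity

lemma reflTransGen_PW_pos (hJ : 0 ≤ J) (σ τ : Config N) :
    Relation.ReflTransGen (fun σ τ => 0 < PW N J σ τ) σ τ := by
  rw [← flipSpins_diffSet σ τ]
  refine Relation.ReflTransGen.mono (fun a b (h : ∃ i, b = flipSpins {i} a) => ?_) _ _
    (reflTransGen_flipSpins σ _)
  obtain ⟨i, rfl⟩ := h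
  exact PW_flipSpins_singleton_pos hJ a i

lemma eq_not_of_mem_diffSet {σ η : Config N} {i : ZMod N} (hi : i ∈ diffSet σ η) :
    η i = !σ i := by
  rw [mem_diffSet] at hi
  cases h : σ i <;> simp_all

lemma constOn_diffSet_iff (σ η : Config N) :
    ConstOn η (diffSet σ η) ↔ ConstOn σ (diffSet σ η) := by
  refine forall₂_congr fun i hi => forall₂_congr fun j hj => ?_
  rw [eq_not_of_mem_diffSet hi, eq_not_of_mem_diffSet hj, Bool.not_inj_iff]

lemma energy_sub_energy (σ η : Config N) :
    energy N σ - energy N η = 2 * #(edgeBoundary (diffSet σ η) ∩ Bplus σ) -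
      2 * #(edgeBoundary (diffSet σ η) ∩ Bplus η) := by
  have hedge : ∀ i, spin (σ i) * spin (σ (i + 1)) - spin (η i) * spin (η (i + 1)) =
      2 * (if i ∈ edgeBoundary (diffSet σ η) ∩ Bplus σ then 1 else 0) -
        2 * (if i ∈ edgeBoundary (diffSet σ η) ∩ Bplus η then 1 else 0) := fun i => by
    simp only [mem_inter, edgeBoundary, Bplus, mem_filter, mem_univ, true_and, mem_diffSet]
    generalize σ i = a, σ (i + 1) = b, η i = c, η (i + 1) = d
    cases a <;> cases b <;> cases c <;> cases d <;> norm_num [spin]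
  rw [energy, energy, ← sum_sub_distrib, sum_congr rfl fun i _ => hedge i, sum_sub_distrib,
    ← mul_sum, ← mul_sum, sum_boole, sum_boole, filter_mem_eq_inter, filter_mem_eq_inter,
    univ_inter, univ_inter]

lemma exp_energy_mul_PW_comm (σ η : Config N) :
    exp (J * energy N σ) * PW N J σ η = exp (J * energy N η) * PW N J η σ := by
  have hE := energy_sub_energy σ η
  have hcomm : IsArc (diffSet η σ) ∧ ConstOn η (diffSet η σ) ↔
      IsArc (diffSet σ η) ∧ ConstOn σ (diffSet σ η) := by
    rw [diffSet_comm η σ, constOn_diffSet_iff]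
  unfold PW
  by_cases hcond : IsArc (diffSet σ η) ∧ ConstOn σ (diffSet σ η)
  · rw [if_pos hcond, if_pos (hcomm.2 hcond), diffSet_comm η σ]
    split_ifs with huniv
    · have : energy N σ = energy N η := by simpa [huniv, edgeBoundary, sub_eq_zero] using hE
      rw [this]
    · have key : exp (J * energy N σ) * exp (-2 * J) ^ #(edgeBoundary (diffSet σ η) ∩ Bplus σ) =
          exp (J * energy N η) * exp (-2 * J) ^ #(edgeBoundary (diffSet σ η) ∩ Bplus η) := by
        rw [← exp_nat_mul, ← exp_nat_mul, ← exp_add, ← exp_add]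
        congr 1
        linear_combination J * hE
      linear_combination (#(diffSet σ η) / N * (1 - exp (-2 * J)) ^ (#(diffSet σ η) - 1) : ℝ) * key
  · rw [if_neg hcond, if_neg (mt hcomm.1 hcond), mul_zero, mul_zero]

lemma gibbs_mul_PW_comm (σ η : Config N) :
    gibbs N J σ * PW N J σ η = gibbs N J η * PW N J η σ := by
  simp only [gibbs, div_mul_eq_mul_div, exp_energy_mul_PW_comm σ η]

lemma sum_gibbs : ∑ σ : Config N, gibbs N J σ = 1 := by
  simp only [gibbs, ← sum_div]
  exact div_self (sum_pos (fun _ _ => exp_pos _) univ_nonempty).ne'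

end Wolff

open MeasureTheory Filter in
theorem wolff_ergodic_theorem_general (N : ℕ) [NeZero N]
    (J : ℝ) (hJ : 0 ≤ J) (σ0 : Config N)
    {E : Type*} [MeasurableSpace E] (P : Measure E) [IsProbabilityMeasure P]
    (Y : ℕ → E → Config N) (hY : ∀ k, Measurable (Y k))
    (hpath : ∀ (m : ℕ) (path : Fin (m + 1) → Config N),
      P {e | ∀ j : Fin (m + 1), Y (j.val + 1) e = path j} =
        ENNReal.ofReal ((if path 0 = σ0 then (1 : ℝ) else 0) *
          ∏ j : Fin m, PW N J (path j.castSucc) (path j.succ)))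
    (g : Config N → ℝ) :
    ∀ᵐ e ∂P, Tendsto (fun M : ℕ => (∑ k ∈ Finset.Icc 1 M, g (Y k e)) / M)
      atTop (nhds (Emu N J g)) := by
  have hchain : IsMarkovChain (PW N J) σ0 P fun k => Y (k + 1) := hpath
  filter_upwards [hchain.ae_tendsto_average (fun k => hY (k + 1)) (PW_nonneg hJ)
    (reflTransGen_PW_pos hJ) sum_gibbs gibbs_mul_PW_comm g] with e he
  refine he.congr fun M => ?_
  rw [← Ico_add_one_right_eq_Icc, sum_Ico_eq_sum_range, add_tsub_cancel_right]
  simp only [add_comm]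

open MeasureTheory Filter in
/-- **Ergodic theorem for the Wolff dynamics** in the subcritical regime:
if `(Y_k)_{k≥1}` is a Markov chain with transition matrix `P_W` started from an
arbitrary initial configuration `σ0` (encoded through its finite-dimensional
distributions), then for every `g : Ω → ℝ`, almost surely
`(1/M)∑_{k=1}^M g(Y_k) → E_{μ_N}[g]` as `M → ∞`. -/
theorem wolff_ergodic_theorem (N : ℕ) (hN : 3 ≤ N) [NeZero N]
    (J : ℝ) (hJ : 0 ≤ J) (σ0 : Config N)
    {E : Type*} [MeasurableSpace E] (P : Measure E) [IsProbabilityMeasure P]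
    (Y : ℕ → E → Config N) (hY : ∀ k, Measurable (Y k))
    (hpath : ∀ (m : ℕ) (path : Fin (m + 1) → Config N),
      P {e | ∀ j : Fin (m + 1), Y (j.val + 1) e = path j} =
        ENNReal.ofReal ((if path 0 = σ0 then (1 : ℝ) else 0) *
          ∏ j : Fin m, PW N J (path j.castSucc) (path j.succ)))
    (g : Config N → ℝ) :
    ∀ᵐ e ∂P, Tendsto (fun M : ℕ => (∑ k ∈ Finset.Icc 1 M, g (Y k e)) / M)
      atTop (nhds (Emu N J g)) :=
  wolff_ergodic_theorem_general N J hJ σ0 P Y hY hpath g
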